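/- Let G be a polygon graph with cycle of length k and let ω ∈ τ(G) be the degree-2 element with value 1 on every cycle edge, value 2 on a specified set S of cycle legs, and value 0 on the remaining cycle legs. Then ω is a sum of two degree-1 elements (networks) of τ(G) if and only if |S| is even. -/

import Mathlib

/-!
Common setup: finite (multi)graphs with ordered boundary maps `fst`, `snd`
(the boundary is morally unordered; loops and multiple edges are allowed).
-/

structure TGraph where
  V : Type
  E : Type
  [fintV : Fintype V]
  [fintE : Fintype E]
  [decV : DecidableEq V]
  [decE : DecidableEq E]
  fst : E → V
  snd : E → V

namespace TGraph

variable (G : TGraph)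

instance : Fintype G.V := G.fintV
instance : Fintype G.E := G.fintE
instance : DecidableEq G.V := G.decV
instance : DecidableEq G.E := G.decE

/-- Number of endpoints of `e` equal to `v` (a loop counts twice). -/
def mult (v : G.V) (e : G.E) : ℕ :=
  (if G.fst e = v then 1 else 0) + (if G.snd e = v then 1 else 0)

/-- Valency of a vertex (a loop contributes two). -/
def degree (v : G.V) : ℕ := ∑ e, G.mult v e

/-- A leaf is a vertex incident to exactly one edge (valency one). -/
def IsLeaf (v : G.V) : Prop := G.degree v = 1

instance : DecidablePred G.IsLeaf := fun v => inferInstanceAs (Decidable (G.degree v = 1))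

/-- A graph is trivalent when every non-leaf vertex has valency three. -/
def Trivalent : Prop := ∀ v, G.degree v = 1 ∨ G.degree v = 3

/-- The number of leaves. -/
def numLeaves : ℕ := Fintype.card {v : G.V // G.IsLeaf v}

/-- The number of inner (non-leaf) vertices. -/
def numInner : ℕ := Fintype.card {v : G.V // ¬ G.IsLeaf v}

/-- The number of connected components. -/
noncomputable def components : ℕ :=
  Nat.card (Quot fun v w : G.V =>
    ∃ e, (G.fst e = v ∧ G.snd e = w) ∨ (G.fst e = w ∧ G.snd e = v))

/-- The first Betti number, computed via the Euler characteristic: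
`g = |E| - |V| + c`. -/
noncomputable def betti : ℤ := (Fintype.card G.E : ℤ) - Fintype.card G.V + G.components

/-- The value of the vertex functional `v = Σ_{e ∋ v} e*` on an edge labeling. -/
def vsum (v : G.V) (u : G.E → ℤ) : ℤ := ∑ e, (G.mult v e : ℤ) * u e

/-- Membership in the graded lattice `M^gr = ℤ ⊕ M`: the edge labeling has even
sum at every inner vertex. -/
def InMgr (ω : ℤ × (G.E → ℤ)) : Prop :=
  ∀ v, ¬ G.IsLeaf v → Even (G.vsum v ω.2)

/-- Membership in the graded cone `τ(G) ⊂ ℤ ⊕ M`: nonnegative degree and edge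
values, parity at inner vertices, the triangle inequalities at every inner
vertex (encoded as: twice each incident value is at most the local sum), and
the degree bound `deg ω ≥ deg_v ω` at every inner vertex. -/
def InCone (ω : ℤ × (G.E → ℤ)) : Prop :=
  0 ≤ ω.1 ∧ (∀ e, 0 ≤ ω.2 e) ∧
  ∀ v, ¬ G.IsLeaf v →
    Even (G.vsum v ω.2) ∧
    (∀ e, G.mult v e ≠ 0 → 2 * ω.2 e ≤ G.vsum v ω.2) ∧
    G.vsum v ω.2 ≤ 2 * ω.1

/-- A network: a 0-1 edge labeling with even local sum at every inner vertex.
For trivalent graphs this is exactly a disjoint union of leaf-to-leaf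
edge-paths and cycles. -/
def IsNetwork (u : G.E → ℤ) : Prop :=
  (∀ e, u e = 0 ∨ u e = 1) ∧ ∀ v, ¬ G.IsLeaf v → Even (G.vsum v u)

end TGraph

/-- Cyclic successor on `Fin k`. -/
def cnext {k : ℕ} (i : Fin k) : Fin k := ⟨(i.val + 1) % k, Nat.mod_lt _ i.pos⟩

/-- The polygon graph with `k` cycle edges and `k` cycle legs: cycle vertices
`Sum.inl i`, leaf vertices `Sum.inr i`; cycle edges `Sum.inl i` (from cycle
vertex `i` to cycle vertex `i+1`) and cycle legs `Sum.inr i` (from cycle vertex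
`i` to the `i`-th leaf). -/
def polygon (k : ℕ) : TGraph where
  V := Fin k ⊕ Fin k
  E := Fin k ⊕ Fin k
  fst := Sum.elim (fun i => Sum.inl i) (fun i => Sum.inl i)
  snd := Sum.elim (fun i => Sum.inl (cnext i)) (fun i => Sum.inr i)

/-!
At a cycle vertex, the triangle inequality for the leg together with the degree bound caps the
leg value of a degree-one element of `τ(G)` at `1`. Hence in `ω = u + w` a leg of weight `2`
splits as `1 + 1` and a leg of weight `0` as `0 + 0`, so `u` carries exactly the legs in `S`.
Since every edge has two ends, the local sums of `u` over all vertices add up to an even number;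
those at cycle vertices are even, so those at the leaves, which are the leg values of `u`,
have even sum, i.e. `|S|` is even.

Conversely, give the cycle edge `i` the parity of the number of legs of `S` among the legs
`0, …, i`. Together with the legs in `S` this is a network, and so is its complement on the
cycle; the parity condition closes up at vertex `0` exactly because `|S|` is even. On the
trivalent polygon graph every network lies in `τ(G)` in degree one, and the two add up to `ω`.
-/

open Finset

namespace TGraph

variable (G : TGraph)

lemma sum_mult (e : G.E) : ∑ v, G.mult v e = 2 := by
  simp [mult, sum_add_distrib]

lemma sum_vsum (u : G.E → ℤ) : ∑ v, G.vsum v u = 2 * ∑ e, u e := by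
  simp only [vsum]
  rw [sum_comm, mul_sum]
  refine sum_congr rfl fun e _ => ?_
  rw [← sum_mul, ← Nat.cast_sum, sum_mult, Nat.cast_ofNat]

variable {G}

lemma InMgr.even_sum_vsum_leaves {ω : ℤ × (G.E → ℤ)} (h : G.InMgr ω) :
    Even (∑ v with G.IsLeaf v, G.vsum v ω.2) := by
  have hinner : Even (∑ v with ¬ G.IsLeaf v, G.vsum v ω.2) :=
    even_sum _ fun v hv => h v (mem_filter.mp hv).2
  have htotal := sum_filter_add_sum_filter_not univ G.IsLeaf fun v => G.vsum v ω.2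
  rw [sum_vsum] at htotal
  have : Even (2 * ∑ e, ω.2 e) := even_two_mul _
  rw [← htotal] at this
  exact (Int.even_add.mp this).mpr hinner

lemma InCone.inMgr {ω : ℤ × (G.E → ℤ)} (h : G.InCone ω) : G.InMgr ω :=
  fun v hv => (h.2.2 v hv).1

lemma InCone.le_deg {ω : ℤ × (G.E → ℤ)} (h : G.InCone ω) {v : G.V} (hv : ¬ G.IsLeaf v)
    {e : G.E} (he : G.mult v e ≠ 0) : ω.2 e ≤ ω.1 := by
  obtain ⟨-, htri, hdeg⟩ := h.2.2 v hv
  linarith [htri e he]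

lemma le_vsum {u : G.E → ℤ} (hu : ∀ e, 0 ≤ u e) {v : G.V} {e : G.E}
    (he : G.mult v e ≠ 0) : u e ≤ G.vsum v u := by
  calc u e ≤ (G.mult v e : ℤ) * u e :=
        le_mul_of_one_le_left (hu e) (by exact_mod_cast Nat.one_le_iff_ne_zero.mpr he)
    _ ≤ G.vsum v u :=
      single_le_sum (f := fun e => (G.mult v e : ℤ) * u e)
        (fun e _ => mul_nonneg (Nat.cast_nonneg _) (hu e)) (mem_univ e)

lemma vsum_le_degree {u : G.E → ℤ} (hu : ∀ e, u e ≤ 1) (v : G.V) :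
    G.vsum v u ≤ G.degree v := by
  rw [vsum, degree, Nat.cast_sum]
  exact sum_le_sum fun e _ => mul_le_of_le_one_right (Nat.cast_nonneg _) (hu e)

lemma IsNetwork.inCone (hG : G.Trivalent) {u : G.E → ℤ} (hu : G.IsNetwork u) :
    G.InCone (1, u) := by
  have hnonneg : ∀ e, 0 ≤ u e := fun e => by rcases hu.1 e with h | h <;> simp [h]
  have hle : ∀ e, u e ≤ 1 := fun e => by rcases hu.1 e with h | h <;> simp [h]
  refine ⟨zero_le_one, hnonneg, fun v hv => ?_⟩
  obtain ⟨m, hm⟩ := hu.2 v hv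
  have hdeg : G.vsum v u ≤ 3 := by
    have := vsum_le_degree hle v
    rcases hG v with h | h
    · exact absurd h hv
    · rw [h] at this; exact_mod_cast this
  refine ⟨hu.2 v hv, fun e he => ?_, show G.vsum v u ≤ 2 * 1 by omega⟩
  have := le_vsum hnonneg he
  show 2 * u e ≤ G.vsum v u
  rcases hu.1 e with h | h <;> omega

end TGraph

section Polygon

variable {k : ℕ}

lemma cnext_eq_finRotate (i : Fin k) : cnext i = finRotate k i := by
  have := i.neZero
  rw [finRotate_apply]
  ext
  simp [cnext, Fin.val_add]

lemma val_finRotate_symm (i : Fin k) :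
    ((finRotate k).symm i : ℕ) = if (i : ℕ) = 0 then k - 1 else i - 1 := by
  obtain ⟨n, rfl⟩ := Nat.exists_eq_succ_of_ne_zero i.pos.ne'
  rw [finRotate_symm_apply, Fin.coe_sub_one]
  simp only [Fin.val_eq_zero_iff, Nat.succ_sub_one]

lemma polygon_sum_edges {M : Type*} [AddCommMonoid M] (f : (polygon k).E → M) :
    ∑ e, f e = ∑ i, f (.inl i) + ∑ i, f (.inr i) :=
  Fintype.sum_sum_type f

lemma polygon_sum_vertices {M : Type*} [AddCommMonoid M] (f : (polygon k).V → M) :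
    ∑ v, f v = ∑ i, f (.inl i) + ∑ i, f (.inr i) :=
  Fintype.sum_sum_type f

lemma polygon_mult_inl_inl (i j : Fin k) :
    (polygon k).mult (.inl i) (.inl j) =
      (if j = i then 1 else 0) + if j = (finRotate k).symm i then 1 else 0 := by
  simp [TGraph.mult, polygon, cnext_eq_finRotate, Equiv.eq_symm_apply, -finRotate_apply,
    -finRotate_symm_apply]

lemma polygon_mult_inl_inr (i j : Fin k) :
    (polygon k).mult (.inl i) (.inr j) = if j = i then 1 else 0 := by
  simp [TGraph.mult, polygon]

lemma polygon_mult_inr_inl (i j : Fin k) : (polygon k).mult (.inr i) (.inl j) = 0 := by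
  simp [TGraph.mult, polygon]

lemma polygon_mult_inr_inr (i j : Fin k) :
    (polygon k).mult (.inr i) (.inr j) = if j = i then 1 else 0 := by
  simp [TGraph.mult, polygon]

lemma polygon_vsum_inl (i : Fin k) (u : (polygon k).E → ℤ) :
    (polygon k).vsum (.inl i) u = u (.inl i) + u (.inl ((finRotate k).symm i)) + u (.inr i) := by
  simp [TGraph.vsum, polygon_sum_edges, polygon_mult_inl_inl, polygon_mult_inl_inr, add_mul,
    sum_add_distrib, -finRotate_symm_apply]

lemma polygon_vsum_inr (i : Fin k) (u : (polygon k).E → ℤ) :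
    (polygon k).vsum (.inr i) u = u (.inr i) := by
  simp [TGraph.vsum, polygon_sum_edges, polygon_mult_inr_inl, polygon_mult_inr_inr]

lemma polygon_degree_inl (i : Fin k) : (polygon k).degree (.inl i) = 3 := by
  simp [TGraph.degree, polygon_sum_edges, polygon_mult_inl_inl, polygon_mult_inl_inr,
    sum_add_distrib, -finRotate_symm_apply]

lemma polygon_degree_inr (i : Fin k) : (polygon k).degree (.inr i) = 1 := by
  simp [TGraph.degree, polygon_sum_edges, polygon_mult_inr_inl, polygon_mult_inr_inr]

lemma polygon_not_isLeaf_inl (i : Fin k) : ¬ (polygon k).IsLeaf (.inl i) := by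
  simp [TGraph.IsLeaf, polygon_degree_inl]

lemma polygon_isLeaf_inr (i : Fin k) : (polygon k).IsLeaf (.inr i) :=
  polygon_degree_inr i

lemma polygon_trivalent : (polygon k).Trivalent
  | .inl i => .inr (polygon_degree_inl i)
  | .inr i => .inl (polygon_degree_inr i)

lemma polygon_sum_vsum_leaves (u : (polygon k).E → ℤ) :
    ∑ v with (polygon k).IsLeaf v, (polygon k).vsum v u = ∑ i, u (.inr i) := by
  rw [sum_filter, polygon_sum_vertices]
  simp [polygon_not_isLeaf_inl, polygon_isLeaf_inr, polygon_vsum_inr]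

lemma polygon_isNetwork_elim {a b : Fin k → ℤ} (ha : ∀ i, a i = 0 ∨ a i = 1)
    (hb : ∀ i, b i = 0 ∨ b i = 1) (hab : ∀ i, Even (a i + a ((finRotate k).symm i) + b i)) :
    (polygon k).IsNetwork (Sum.elim a b) := by
  refine ⟨fun e => e.rec ha hb, fun v hv => ?_⟩
  obtain i | i := v
  · exact (polygon_vsum_inl i (Sum.elim a b)) ▸ hab i
  · exact absurd (polygon_isLeaf_inr i) hv

end Polygon

section LegWeights

variable {k : ℕ} (S : Finset (Fin k))

lemma even_card_of_eq_add {u w : (polygon k).E → ℤ} (hu : (polygon k).InCone (1, u))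
    (hw : (polygon k).InCone (1, w))
    (hsum : Sum.elim (fun _ => (1 : ℤ)) (fun i => if i ∈ S then 2 else 0) = u + w) :
    Even #S := by
  have hleg : ∀ i, u (.inr i) = if i ∈ S then 1 else 0 := by
    intro i
    have hi : (if i ∈ S then 2 else 0) = u (.inr i) + w (.inr i) := congrFun hsum (.inr i)
    have hmult : (polygon k).mult (.inl i) (.inr i) ≠ 0 := by simp [polygon_mult_inl_inr]
    have hu1 : u (.inr i) ≤ 1 := hu.le_deg (polygon_not_isLeaf_inl i) hmult
    have hw1 : w (.inr i) ≤ 1 := hw.le_deg (polygon_not_isLeaf_inl i) hmult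
    have hu0 : 0 ≤ u (.inr i) := hu.2.1 _
    have hw0 : 0 ≤ w (.inr i) := hw.2.1 _
    split_ifs at hi ⊢ <;> omega
  have hleaves := hu.inMgr.even_sum_vsum_leaves
  simpa only [polygon_sum_vsum_leaves, hleg, sum_boole, filter_univ_mem,
    Int.even_coe_nat] using hleaves

def prefixParity (i : Fin k) : ℤ := #{j ∈ S | j ≤ i} % 2

lemma card_filter_le_of_val_ne_zero {i : Fin k} (hi : (i : ℕ) ≠ 0) :
    #{j ∈ S | j ≤ i} = #{j ∈ S | j ≤ (finRotate k).symm i} + if i ∈ S then 1 else 0 := by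
  have hprev : ((finRotate k).symm i : ℕ) = i - 1 := by rw [val_finRotate_symm, if_neg hi]
  have hsplit :
      {j ∈ S | j ≤ i} = {j ∈ S | j ≤ (finRotate k).symm i} ∪ {j ∈ S | j = i} := by
    ext j
    by_cases hj : j ∈ S
    · simp only [mem_union, mem_filter, hj, true_and, Fin.le_def, Fin.ext_iff, hprev]
      omega
    · simp [hj]
  have hdisj : Disjoint {j ∈ S | j ≤ (finRotate k).symm i} {j ∈ S | j = i} := by
    refine disjoint_filter.mpr fun j _ hj hji => ?_
    rw [Fin.le_def, hprev] at hj
    rw [Fin.ext_iff] at hji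
    omega
  rw [hsplit, card_union_of_disjoint hdisj, filter_eq']
  split_ifs <;> simp

lemma card_filter_le_of_val_eq_zero {i : Fin k} (hi : (i : ℕ) = 0) :
    #{j ∈ S | j ≤ i} = if i ∈ S then 1 else 0 := by
  have hfilter : {j ∈ S | j ≤ i} = {j ∈ S | j = i} :=
    filter_congr fun j _ => by rw [Fin.le_def, Fin.ext_iff]; omega
  rw [hfilter, filter_eq']
  split_ifs <;> simp

lemma card_filter_le_finRotate_symm_of_val_eq_zero {i : Fin k} (hi : (i : ℕ) = 0) :
    #{j ∈ S | j ≤ (finRotate k).symm i} = #S := by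
  rw [filter_true_of_mem fun j _ => ?_]
  rw [Fin.le_def, val_finRotate_symm, if_pos hi]
  have := j.isLt
  omega

lemma even_prefixParity_add (hS : Even #S) (i : Fin k) :
    Even (prefixParity S i + prefixParity S ((finRotate k).symm i) + if i ∈ S then 1 else 0) := by
  rw [Int.even_iff]
  unfold prefixParity
  obtain ⟨m, hm⟩ := hS
  by_cases hi : (i : ℕ) = 0
  · have hcur := card_filter_le_of_val_eq_zero S hi
    have hprev := card_filter_le_finRotate_symm_of_val_eq_zero S hi
    split_ifs at hcur ⊢ <;> omega
  · have hcur := card_filter_le_of_val_ne_zero S hi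
    split_ifs at hcur ⊢ <;> omega

lemma exists_eq_add_of_even (hS : Even #S) :
    ∃ u w : (polygon k).E → ℤ, (polygon k).InCone (1, u) ∧ (polygon k).InCone (1, w) ∧
      Sum.elim (fun _ => (1 : ℤ)) (fun i => if i ∈ S then 2 else 0) = u + w := by
  set a := prefixParity S
  set b : Fin k → ℤ := fun i => if i ∈ S then 1 else 0
  have ha : ∀ i, a i = 0 ∨ a i = 1 := fun i => Int.emod_two_eq _
  have hb : ∀ i, b i = 0 ∨ b i = 1 := fun i => by by_cases h : i ∈ S <;> simp [b, h]
  have hab : ∀ i, Even (a i + a ((finRotate k).symm i) + b i) := even_prefixParity_add S hS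
  refine ⟨Sum.elim a b, Sum.elim (1 - a) b, (polygon_isNetwork_elim ha hb hab).inCone
    polygon_trivalent, (polygon_isNetwork_elim (fun i => ?_) hb fun i => ?_).inCone
    polygon_trivalent, ?_⟩
  · rcases ha i with h | h <;> simp [h]
  · have := hab i
    simp only [Pi.sub_apply, Pi.one_apply, Int.even_iff] at this ⊢
    omega
  · refine Eq.trans ?_ (Sum.elim_add_add a (1 - a) b b)
    congr 1 <;> funext i
    · simp
    · by_cases h : i ∈ S <;> simp [b, h]

end LegWeights

/-- In a polygon graph, the degree-2 element with value 1 on all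
cycle edges, 2 on the legs in `S` and 0 on the other legs is a sum of two
networks iff `|S|` is even. -/
theorem degree_two_all_ones_decomposes_iff_even (k : ℕ) (S : Finset (Fin k)) :
    (∃ u w : (polygon k).E → ℤ,
        (polygon k).InCone (1, u) ∧ (polygon k).InCone (1, w) ∧
        (fun e => Sum.elim (fun _ : Fin k => (1 : ℤ))
          (fun i : Fin k => if i ∈ S then 2 else 0) e) = u + w) ↔
      Even S.card :=
  ⟨fun ⟨_, _, hu, hw, hsum⟩ => even_card_of_eq_add S hu hw hsum, exists_eq_add_of_even S⟩
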